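/- arXiv:0906.1099 — 2 statements merged into one kernel-verified Lean document; each statement's English description precedes it below -/
import Mathlib

section
/- For complex z with 0 < Re z < 1 and z ≠ 1 such that 2^{1−z} ≠ 1, the alternating series Σ_{n=1}^∞ (−1)^{n−1}/n^z converges and (1 − 2^{1−z})^{−1} Σ_{n=1}^∞ (−1)^{n−1}/n^z equals the analytic continuation ζ(z) of the Riemann zeta function. -/
open Finset Complex Filter

noncomputable def xiPartial (m : ℕ) (z : ℂ) : ℂ :=
  ∑ k ∈ Finset.Icc 1 m, (-1 : ℂ) ^ (k - 1) * (k : ℂ) ^ (-z)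

/-!
Grouping the terms in pairs, `(2k+1)^{-z} - (2k+2)^{-z} = O(|z| k^{-Re z - 1})` by the mean value
theorem, so the paired series converges absolutely and locally uniformly on `Re z > 0`; since the
terms themselves tend to `0`, it is also the limit of the partial sums. This defines a holomorphic
function `η` on `Re z > 0`. For `Re z > 1` it is the L-function `L(Φ, z)` of the function
`Φ : ZMod 2 → ℂ` with `Φ 1 = 1`, `Φ 0 = -1`, and there `ζ(z) - η(z) = 2 · 2^{-z} ζ(z)` by
separating even and odd `n`. Since `∑ Φ = 0`, `L(Φ, ·)` is entire, and the identity theorem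
propagates `η = L(Φ, ·) = (1 - 2^{1-z}) ζ` from `Re z > 1` to `Re z > 0`, `z ≠ 1`.
-/

open Topology

theorem Finset.sum_range_two_mul {M : Type*} [AddCommMonoid M] (f : ℕ → M) (m : ℕ) :
    ∑ i ∈ range (2 * m), f i = ∑ k ∈ range m, (f (2 * k) + f (2 * k + 1)) := by
  induction m with
  | zero => simp
  | succ m ih =>
    rw [mul_add, mul_one, sum_range_succ, sum_range_succ, sum_range_succ, ih, add_assoc]

theorem norm_sum_range_sub_sum_range_half_le {E : Type*} [SeminormedAddCommGroup E]
    (f : ℕ → E) (n : ℕ) :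
    ‖∑ i ∈ range n, f i - ∑ k ∈ range (n / 2), (f (2 * k) + f (2 * k + 1))‖ ≤ ‖f (n - 1)‖ := by
  obtain ⟨m, rfl | rfl⟩ := Nat.even_or_odd' n
  · simp [sum_range_two_mul]
  · rw [show (2 * m + 1) / 2 = m by omega, sum_range_succ, sum_range_two_mul]
    simp

theorem tendsto_sum_range_of_hasSum_pairs {E : Type*} [SeminormedAddCommGroup E] {f : ℕ → E}
    {S : E} (hf : Tendsto f atTop (𝓝 0)) (hS : HasSum (fun k ↦ f (2 * k) + f (2 * k + 1)) S) :
    Tendsto (fun n ↦ ∑ i ∈ range n, f i) atTop (𝓝 S) := by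
  have hhalf := hS.tendsto_sum_nat.comp (Nat.tendsto_div_const_atTop two_ne_zero)
  have hrest := squeeze_zero_norm (norm_sum_range_sub_sum_range_half_le f)
    (by simpa using (hf.comp (tendsto_sub_atTop_nat 1)).norm)
  simpa using hhalf.add hrest

theorem Summable.tsum_pairs_eq_tsum {E : Type*} [AddCommGroup E] [UniformSpace E]
    [IsUniformAddGroup E] [CompleteSpace E] [T2Space E] {f : ℕ → E} (hf : Summable f) :
    ∑' k, (f (2 * k) + f (2 * k + 1)) = ∑' n, f n := by
  have heven : Summable fun k ↦ f (2 * k) :=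
    hf.comp_injective (mul_right_injective₀ (two_ne_zero' ℕ))
  have hodd : Summable fun k ↦ f (2 * k + 1) :=
    hf.comp_injective ((add_left_injective 1).comp (mul_right_injective₀ (two_ne_zero' ℕ)))
  rw [heven.tsum_add hodd, tsum_even_add_odd heven hodd]

theorem Real.summable_nat_add_one_rpow {p : ℝ} (hp : p < -1) :
    Summable (fun n : ℕ ↦ ((n : ℝ) + 1) ^ p) := by
  simpa using (summable_nat_add_iff 1).mpr (Real.summable_nat_rpow.mpr hp)

theorem norm_natCast_add_one_cpow (n : ℕ) (s : ℂ) :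
    ‖((n : ℂ) + 1) ^ s‖ = ((n : ℝ) + 1) ^ s.re := by
  exact_mod_cast norm_natCast_cpow_of_pos n.succ_pos s

theorem summable_natCast_add_one_cpow_neg {s : ℂ} (hs : 1 < s.re) :
    Summable (fun n : ℕ ↦ ((n : ℂ) + 1) ^ (-s)) :=
  .of_norm <| by
    simpa only [norm_natCast_add_one_cpow] using
      Real.summable_nat_add_one_rpow (p := (-s).re) (by simp; linarith)

theorem norm_ofReal_cpow_sub_ofReal_cpow_le {a b : ℝ} (ha : 0 < a) (hab : a ≤ b) {s : ℂ}
    (hs : s.re ≤ 1) : ‖(b : ℂ) ^ s - (a : ℂ) ^ s‖ ≤ ‖s‖ * a ^ (s.re - 1) * (b - a) := by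
  have hderiv : ∀ t ∈ Set.Icc a b,
      HasDerivWithinAt (fun t : ℝ ↦ (t : ℂ) ^ s) (s * (t : ℂ) ^ (s - 1)) (Set.Icc a b) t := by
    intro t ht
    have ht0 : (t : ℂ) ∈ slitPlane := ofReal_mem_slitPlane.mpr (ha.trans_le ht.1)
    exact ((hasStrictDerivAt_cpow_const ht0).hasDerivAt.comp_ofReal).hasDerivWithinAt
  have hbound : ∀ t ∈ Set.Ico a b, ‖s * (t : ℂ) ^ (s - 1)‖ ≤ ‖s‖ * a ^ (s.re - 1) := by
    intro t ht
    rw [norm_mul, norm_cpow_eq_rpow_re_of_pos (ha.trans_le ht.1), sub_re, one_re]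
    exact mul_le_mul_of_nonneg_left (Real.rpow_le_rpow_of_nonpos ha ht.1 (by linarith))
      (norm_nonneg s)
  exact norm_image_sub_le_of_norm_deriv_le_segment' hderiv hbound b (Set.right_mem_Icc.mpr hab)

theorem eqOn_of_isPreconnected_of_eqOn_one_lt_re {f g : ℂ → ℂ} {U : Set ℂ} (hU : IsOpen U)
    (hUc : IsPreconnected U) (hf : DifferentiableOn ℂ f U) (hg : DifferentiableOn ℂ g U)
    {s₀ : ℂ} (hs₀U : s₀ ∈ U) (hs₀ : 1 < s₀.re) (hfg : ∀ s : ℂ, 1 < s.re → f s = g s) :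
    Set.EqOn f g U :=
  (hf.analyticOnNhd hU).eqOn_of_preconnected_of_eventuallyEq (hg.analyticOnNhd hU) hUc hs₀U
    (eventually_of_mem ((isOpen_lt continuous_const continuous_re).mem_nhds hs₀) hfg)

noncomputable def etaTerm (z : ℂ) (n : ℕ) : ℂ := (-1) ^ n * ((n : ℂ) + 1) ^ (-z)

noncomputable def dirichletEta (z : ℂ) : ℂ :=
  ∑' k : ℕ, (etaTerm z (2 * k) + etaTerm z (2 * k + 1))

theorem xiPartial_eq_sum_range_etaTerm (n : ℕ) (z : ℂ) :
    xiPartial n z = ∑ j ∈ range n, etaTerm z j := by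
  rw [xiPartial, ← Finset.Ico_add_one_right_eq_Icc, Finset.sum_Ico_eq_sum_range]
  refine sum_congr rfl fun j _ ↦ ?_
  simp [etaTerm, add_comm]

theorem norm_etaTerm (z : ℂ) (n : ℕ) : ‖etaTerm z n‖ = ((n : ℝ) + 1) ^ (-z.re) := by
  simp [etaTerm, norm_natCast_add_one_cpow]

theorem tendsto_etaTerm_atTop {z : ℂ} (hz : 0 < z.re) : Tendsto (etaTerm z) atTop (𝓝 0) := by
  refine squeeze_zero_norm (fun n ↦ (norm_etaTerm z n).le) ?_
  exact (tendsto_rpow_neg_atTop hz).comp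
    (tendsto_atTop_add_const_right _ 1 tendsto_natCast_atTop_atTop)

theorem summable_etaTerm {s : ℂ} (hs : 1 < s.re) : Summable (etaTerm s) :=
  (summable_natCast_add_one_cpow_neg hs).alternating

theorem differentiable_etaTerm (n : ℕ) : Differentiable ℂ (etaTerm · n) := fun _ ↦
  (differentiableAt_id.neg.const_cpow (.inl (Nat.cast_add_one_ne_zero n))).const_mul _

theorem etaTerm_two_mul_add_etaTerm (z : ℂ) (k : ℕ) :
    etaTerm z (2 * k) + etaTerm z (2 * k + 1) =
      ((2 * k + 1 : ℝ) : ℂ) ^ (-z) - ((2 * k + 2 : ℝ) : ℂ) ^ (-z) := by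
  simp only [etaTerm, pow_succ, pow_mul]
  push_cast
  ring_nf

theorem norm_etaTerm_pair_le {z : ℂ} {σ : ℝ} (hσ : -1 ≤ σ) (hσz : σ ≤ z.re) (k : ℕ) :
    ‖etaTerm z (2 * k) + etaTerm z (2 * k + 1)‖ ≤ ‖z‖ * ((k : ℝ) + 1) ^ (-σ - 1) := by
  have hk : (0 : ℝ) < 2 * k + 1 := by positivity
  calc ‖etaTerm z (2 * k) + etaTerm z (2 * k + 1)‖
      ≤ ‖-z‖ * (2 * k + 1 : ℝ) ^ ((-z).re - 1) * ((2 * k + 2) - (2 * k + 1)) := by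
        rw [etaTerm_two_mul_add_etaTerm, norm_sub_rev]
        exact norm_ofReal_cpow_sub_ofReal_cpow_le hk (by linarith) (by simp; linarith)
    _ = ‖z‖ * (2 * k + 1 : ℝ) ^ (-z.re - 1) := by rw [norm_neg, neg_re]; ring
    _ ≤ ‖z‖ * ((k : ℝ) + 1) ^ (-σ - 1) := by
        gcongr ‖z‖ * ?_
        calc (2 * k + 1 : ℝ) ^ (-z.re - 1) ≤ (2 * k + 1 : ℝ) ^ (-σ - 1) :=
              Real.rpow_le_rpow_of_exponent_le (by linarith) (by linarith)
          _ ≤ ((k : ℝ) + 1) ^ (-σ - 1) :=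
              Real.rpow_le_rpow_of_nonpos (by positivity) (by linarith) (by linarith)

theorem summable_etaTerm_pair {z : ℂ} (hz : 0 < z.re) :
    Summable (fun k ↦ etaTerm z (2 * k) + etaTerm z (2 * k + 1)) :=
  .of_norm_bounded ((Real.summable_nat_add_one_rpow (by linarith)).mul_left ‖z‖)
    (norm_etaTerm_pair_le (by linarith) le_rfl)

theorem tendsto_xiPartial_dirichletEta {z : ℂ} (hz : 0 < z.re) :
    Tendsto (xiPartial · z) atTop (𝓝 (dirichletEta z)) := by
  simp_rw [xiPartial_eq_sum_range_etaTerm]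
  exact tendsto_sum_range_of_hasSum_pairs (tendsto_etaTerm_atTop hz)
    (summable_etaTerm_pair hz).hasSum

theorem differentiableOn_dirichletEta : DifferentiableOn ℂ dirichletEta {z | 0 < z.re} := by
  intro z (hz : 0 < z.re)
  set U := {w : ℂ | z.re / 2 < w.re} ∩ Metric.ball 0 (‖z‖ + 1)
  have hU : IsOpen U := (isOpen_lt continuous_const continuous_re).inter Metric.isOpen_ball
  have hzU : z ∈ U := ⟨show z.re / 2 < z.re by linarith, by simp⟩
  have hdiff : DifferentiableOn ℂ dirichletEta U := by
    refine differentiableOn_tsum_of_summable_norm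
      ((Real.summable_nat_add_one_rpow (p := -(z.re / 2) - 1) (by linarith)).mul_left
        (‖z‖ + 1)) (fun k ↦ ?_) hU fun k w hw ↦ ?_
    · exact ((differentiable_etaTerm _).add (differentiable_etaTerm _)).differentiableOn
    · have hwz : ‖w‖ ≤ ‖z‖ + 1 := by simpa using (Metric.mem_ball.mp hw.2).le
      calc _ ≤ ‖w‖ * ((k : ℝ) + 1) ^ (-(z.re / 2) - 1) :=
            norm_etaTerm_pair_le (by linarith) hw.1.le k
        _ ≤ _ := by gcongr
  exact (hdiff.differentiableAt (hU.mem_nhds hzU)).differentiableWithinAt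

theorem dirichletEta_eq_tsum_etaTerm {s : ℂ} (hs : 1 < s.re) :
    dirichletEta s = ∑' n, etaTerm s n :=
  (summable_etaTerm hs).tsum_pairs_eq_tsum

theorem tsum_etaTerm {s : ℂ} (hs : 1 < s.re) :
    ∑' n, etaTerm s n = (1 - 2 ^ (1 - s)) * riemannZeta s := by
  set t : ℕ → ℂ := fun n ↦ ((n : ℂ) + 1) ^ (-s)
  have ht : Summable t := summable_natCast_add_one_cpow_neg hs
  have hζ : riemannZeta s = ∑' n, t n := by
    simp only [zeta_eq_tsum_one_div_nat_add_one_cpow hs, t, cpow_neg, one_div]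
  -- `t n - etaTerm s n` vanishes for even `n`, and `t (2k+1) = 2⁻ˢ t k`
  have hpair : ∀ k, (t (2 * k) - etaTerm s (2 * k)) + (t (2 * k + 1) - etaTerm s (2 * k + 1))
      = 2 ^ (1 - s) * t k := fun k ↦ by
    have h2k : ((2 * k + 1 : ℕ) : ℂ) + 1 = ((2 : ℝ) : ℂ) * (((k : ℝ) + 1 : ℝ) : ℂ) := by
      push_cast; ring
    have h2 : (2 : ℂ) ^ (1 - s) = 2 * 2 ^ (-s) := by
      rw [sub_eq_add_neg, cpow_add _ _ two_ne_zero, cpow_one]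
    simp only [t, etaTerm, h2k, h2, pow_succ, pow_mul,
      mul_cpow_ofReal_nonneg zero_le_two (by positivity : (0 : ℝ) ≤ k + 1)]
    push_cast
    ring
  have hdiff : riemannZeta s - ∑' n, etaTerm s n = 2 ^ (1 - s) * riemannZeta s := by
    rw [hζ, ← ht.tsum_sub (summable_etaTerm hs),
      ← (ht.sub (summable_etaTerm hs)).tsum_pairs_eq_tsum]
    simp only [hpair, tsum_mul_left]
  linear_combination -hdiff

noncomputable def altSign (j : ZMod 2) : ℂ := (-1) ^ (j.val + 1)

theorem sum_altSign : ∑ j, altSign j = 0 := by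
  rw [Fintype.sum_eq_add 0 1 (by decide) (by decide)]
  norm_num [altSign, show (1 : ZMod 2).val = 1 from rfl]

theorem altSign_natCast_add_one (n : ℕ) : altSign ((n + 1 : ℕ) : ZMod 2) = (-1) ^ n := by
  rw [altSign, ZMod.val_natCast, pow_succ, ← neg_one_pow_eq_pow_mod_two]
  ring

theorem LFunction_altSign_eq_tsum_etaTerm {s : ℂ} (hs : 1 < s.re) :
    ZMod.LFunction altSign s = ∑' n, etaTerm s n := by
  rw [ZMod.LFunction_eq_LSeries _ hs, LSeries,
    (ZMod.LSeriesSummable_of_one_lt_re _ hs).tsum_eq_zero_add, LSeries.term_zero, zero_add]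
  refine tsum_congr fun n ↦ ?_
  rw [LSeries.term_of_ne_zero n.succ_ne_zero, altSign_natCast_add_one, etaTerm, cpow_neg,
    div_eq_mul_inv]
  push_cast
  rfl

theorem LFunction_altSign {s : ℂ} (hs : s ≠ 1) :
    ZMod.LFunction altSign s = (1 - 2 ^ (1 - s)) * riemannZeta s := by
  refine eqOn_of_isPreconnected_of_eqOn_one_lt_re isOpen_compl_singleton
    (isConnected_compl_singleton_of_one_lt_rank (by simp) _).isPreconnected
    (ZMod.differentiable_LFunction_of_sum_zero sum_altSign).differentiableOn
    (fun u hu ↦ ?_) (s₀ := 2) (by norm_num) (by norm_num)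
    (fun w hw ↦ (LFunction_altSign_eq_tsum_etaTerm hw).trans (tsum_etaTerm hw)) hs
  exact (((differentiableAt_const _).sub (((differentiableAt_const _).sub
    differentiableAt_id).const_cpow (.inl two_ne_zero))).mul
      (differentiableAt_riemannZeta hu)).differentiableWithinAt

theorem dirichletEta_eq_LFunction_altSign {s : ℂ} (hs : 0 < s.re) :
    dirichletEta s = ZMod.LFunction altSign s :=
  eqOn_of_isPreconnected_of_eqOn_one_lt_re (isOpen_lt continuous_const continuous_re)
    (convex_halfSpace_re_gt 0).isPreconnected differentiableOn_dirichletEta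
    (ZMod.differentiable_LFunction_of_sum_zero sum_altSign).differentiableOn
    (s₀ := 2) (by norm_num) (by norm_num)
    (fun w hw ↦ (dirichletEta_eq_tsum_etaTerm hw).trans
      (LFunction_altSign_eq_tsum_etaTerm hw).symm) hs

theorem dirichletEta_eq_mul_riemannZeta {s : ℂ} (hs : 0 < s.re) (hs₁ : s ≠ 1) :
    dirichletEta s = (1 - 2 ^ (1 - s)) * riemannZeta s := by
  rw [dirichletEta_eq_LFunction_altSign hs, LFunction_altSign hs₁]

theorem alternating_series_eq_zeta_general (z : ℂ) (h0 : 0 < z.re)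
    (hz : z ≠ 1) (h2 : (2 : ℂ) ^ ((1 : ℂ) - z) ≠ 1) :
    ∃ S : ℂ, Tendsto (fun n => xiPartial n z) atTop (nhds S) ∧
      ((1 : ℂ) - (2 : ℂ) ^ ((1 : ℂ) - z))⁻¹ * S = riemannZeta z := by
  refine ⟨dirichletEta z, tendsto_xiPartial_dirichletEta h0, ?_⟩
  rw [dirichletEta_eq_mul_riemannZeta h0 hz, ← mul_assoc,
    inv_mul_cancel₀ (sub_ne_zero.mpr h2.symm), one_mul]

theorem alternating_series_eq_zeta (z : ℂ) (h0 : 0 < z.re) (h1 : z.re < 1)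
    (hz : z ≠ 1) (h2 : (2 : ℂ) ^ ((1 : ℂ) - z) ≠ 1) :
    ∃ S : ℂ, Tendsto (fun n => xiPartial n z) atTop (nhds S) ∧
      ((1 : ℂ) - (2 : ℂ) ^ ((1 : ℂ) - z))⁻¹ * S = riemannZeta z :=
  alternating_series_eq_zeta_general z h0 hz h2
end

section
/- For every complex z with Re z > 0 and every n ≥ 1, the tail of the alternating series satisfies |Σ_{k=n+1}^∞ (−1)^{k−1} k^{−z}| ≤ (1 + |z|/Re z) · n^{−Re z}. -/
/-!
Pair consecutive terms of the tail. By the mean value inequality, applied with the real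
majorant `t ↦ -(|z|/Re z) t^(-Re z)` of the derivative `-z t^(-z-1)`, a pair differs by at most
`(|z|/Re z) (k^(-Re z) - (k+1)^(-Re z))`; these bounds telescope to `(|z|/Re z) (n+1)^(-Re z)`,
and an unpaired last term contributes at most `(n+1)^(-Re z)`.
-/

open Finset Complex Filter

theorem norm_sub_le_sub_of_norm_deriv_le_deriv {E : Type*} [NormedAddCommGroup E]
    [NormedSpace ℝ E] {f f' : ℝ → E} {g g' : ℝ → ℝ} {a b : ℝ} (hab : a ≤ b)
    (hf : ∀ x ∈ Set.Icc a b, HasDerivAt f (f' x) x)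
    (hg : ∀ x ∈ Set.Icc a b, HasDerivAt g (g' x) x)
    (bound : ∀ x ∈ Set.Ico a b, ‖f' x‖ ≤ g' x) :
    ‖f b - f a‖ ≤ g b - g a := by
  have hF : ∀ x ∈ Set.Icc a b, HasDerivAt (fun t => f t - f a) (f' x) x :=
    fun x hx => (hf x hx).sub_const _
  have hG : ∀ x ∈ Set.Icc a b, HasDerivAt (fun t => g t - g a) (g' x) x :=
    fun x hx => (hg x hx).sub_const _
  exact image_norm_le_of_norm_deriv_right_le_deriv_boundary'
    (fun x hx => (hF x hx).continuousAt.continuousWithinAt)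
    (fun x hx => (hF x (Set.Ico_subset_Icc_self hx)).hasDerivWithinAt) (by simp)
    (fun x hx => (hG x hx).continuousAt.continuousWithinAt)
    (fun x hx => (hG x (Set.Ico_subset_Icc_self hx)).hasDerivWithinAt) bound
    (Set.right_mem_Icc.2 hab)

theorem norm_ofReal_cpow_neg_sub_le {z : ℂ} (hz : 0 < z.re) {x y : ℝ} (hx : 0 < x)
    (hxy : x ≤ y) :
    ‖(x : ℂ) ^ (-z) - (y : ℂ) ^ (-z)‖ ≤ ‖z‖ / z.re * (x ^ (-z.re) - y ^ (-z.re)) := by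
  have hpos : ∀ t ∈ Set.Icc x y, 0 < t := fun t ht => hx.trans_le ht.1
  have hf : ∀ t ∈ Set.Icc x y,
      HasDerivAt (fun s : ℝ => (s : ℂ) ^ (-z)) (-z * (t : ℂ) ^ (-z - 1)) t := fun t ht => by
    simpa using (hasStrictDerivAt_cpow_const (c := -z)
      (ofReal_mem_slitPlane.2 (hpos t ht))).hasDerivAt.comp_ofReal
  have hg : ∀ t ∈ Set.Icc x y, HasDerivAt (fun s : ℝ => -(‖z‖ / z.re) * s ^ (-z.re))
      (‖z‖ * t ^ (-z.re - 1)) t := fun t ht => by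
    refine ((Real.hasDerivAt_rpow_const (Or.inl (hpos t ht).ne')).const_mul
      (-(‖z‖ / z.re))).congr_deriv ?_
    field_simp [hz.ne']
  have key := norm_sub_le_sub_of_norm_deriv_le_deriv hxy hf hg fun t ht => by
    rw [norm_mul, norm_neg, norm_cpow_eq_rpow_re_of_pos (hpos t (Set.Ico_subset_Icc_self ht))]
    simp
  rw [← norm_neg, neg_sub]
  linarith

theorem norm_sum_range_neg_one_pow_zsmul_le {E : Type*} [SeminormedAddCommGroup E]
    {a : ℕ → E} {φ : ℕ → ℝ} {c : ℝ} (hc : 0 ≤ c) (hφ : Antitone φ)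
    (ha : ∀ k, ‖a k‖ ≤ φ k) (hda : ∀ k, ‖a k - a (k + 1)‖ ≤ c * (φ k - φ (k + 1)))
    (N : ℕ) : ‖∑ i ∈ range N, (-1 : ℤ) ^ i • a i‖ ≤ (1 + c) * φ 0 := by
  have hφ0 : 0 ≤ φ 0 := (norm_nonneg _).trans (ha 0)
  induction N using Nat.strong_induction_on generalizing a φ with
  | _ N ih =>
  match N with
  | 0 => simpa using mul_nonneg (by linarith) hφ0
  | 1 => simpa using (ha 0).trans (le_mul_of_one_le_left hφ0 (by linarith))
  | N + 2 =>
    have hrest := ih N (by omega) (a := fun k => a (k + 2)) (φ := fun k => φ (k + 2))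
      (hφ.comp_monotone add_left_mono) (fun k => ha (k + 2)) (fun k => hda (k + 2))
      ((norm_nonneg _).trans (ha 2))
    rw [sum_range_succ', sum_range_succ']
    simp only [pow_succ, pow_zero, mul_neg, mul_one, neg_neg, one_smul, neg_smul,
      zero_add] at hrest ⊢
    calc ‖∑ i ∈ range N, (-1 : ℤ) ^ i • a (i + 2) + -a 1 + a 0‖
        ≤ ‖∑ i ∈ range N, (-1 : ℤ) ^ i • a (i + 2)‖ + ‖a 0 - a 1‖ :=
          (le_of_eq (congrArg _ (by abel))).trans (norm_add_le _ _)
      _ ≤ (1 + c) * φ 2 + c * (φ 0 - φ 1) := add_le_add hrest (hda 0)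
      _ ≤ (1 + c) * φ 0 := by nlinarith [hφ (show 0 ≤ 1 by omega), hφ (show 1 ≤ 2 by omega)]

theorem norm_sum_range_neg_one_pow_zsmul_cpow_le {z : ℂ} (hz : 0 < z.re) {x : ℝ} (hx : 0 < x)
    (N : ℕ) :
    ‖∑ i ∈ range N, (-1 : ℤ) ^ i • ((x + i : ℝ) : ℂ) ^ (-z)‖ ≤
      (1 + ‖z‖ / z.re) * x ^ (-z.re) := by
  have hpos (k : ℕ) : 0 < x + k := by positivity
  simpa using norm_sum_range_neg_one_pow_zsmul_le (φ := fun k : ℕ => (x + k) ^ (-z.re))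
    (by positivity)
    (fun k l hkl => Real.rpow_le_rpow_of_nonpos (hpos k) (by gcongr) (by linarith))
    (fun k => (norm_cpow_eq_rpow_re_of_pos (hpos k) _).le.trans (by simp))
    (fun k => by
      simpa [add_assoc] using
        norm_ofReal_cpow_neg_sub_le hz (hpos k) (y := x + (k + 1)) (by linarith)) N

theorem xiPartial_eq_sum_range (m : ℕ) (z : ℂ) :
    xiPartial m z = ∑ i ∈ range m, (-1 : ℂ) ^ i * ((1 + i : ℝ) : ℂ) ^ (-z) := by
  induction m with
  | zero => simp [xiPartial]
  | succ m ih =>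
    rw [xiPartial, sum_Icc_succ_top (by omega), ← xiPartial, ih, sum_range_succ]
    push_cast
    ring_nf

theorem xiPartial_add_sub (n N : ℕ) (z : ℂ) :
    xiPartial (n + N) z - xiPartial n z =
      (-1 : ℂ) ^ n * ∑ i ∈ range N, (-1 : ℤ) ^ i • ((n + 1 + i : ℝ) : ℂ) ^ (-z) := by
  rw [xiPartial_eq_sum_range, xiPartial_eq_sum_range, sum_range_add, add_sub_cancel_left,
    mul_sum]
  refine sum_congr rfl fun i _ => ?_
  push_cast
  ring_nf

theorem alternating_tail_bound (z : ℂ) (hz : 0 < z.re) (n : ℕ) (hn : 1 ≤ n)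
    (S : ℂ) (hS : Tendsto (fun m => xiPartial m z) atTop (nhds S)) :
    ‖S - xiPartial n z‖ ≤ (1 + ‖z‖ / z.re) * (n : ℝ) ^ (-z.re) := by
  have hpartial : ∀ m ≥ n,
      ‖xiPartial m z - xiPartial n z‖ ≤ (1 + ‖z‖ / z.re) * (n : ℝ) ^ (-z.re) := by
    intro m hm
    obtain ⟨N, rfl⟩ := Nat.exists_eq_add_of_le hm
    rw [xiPartial_add_sub, norm_mul, norm_pow, norm_neg, norm_one, one_pow, one_mul]
    refine (norm_sum_range_neg_one_pow_zsmul_cpow_le hz (by positivity) N).trans ?_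
    refine mul_le_mul_of_nonneg_left ?_ (by positivity)
    exact Real.rpow_le_rpow_of_nonpos (by exact_mod_cast hn) (by linarith) (by linarith)
  exact le_of_tendsto (hS.sub_const _).norm (eventually_atTop.2 ⟨n, hpartial⟩)
end
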